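/- Suppose (Z,μ) is a scope on n variables, ⟨w_j⟩_{j=1}^∞ is an enumeration of 𝕎ₙ, and f : 𝕎ₙ → ℂ satisfies χ^μ(Z ∩ (∩_{j=1}^{m} M_{w_j, f(w_j)})) = χ^μ(Z) > −∞ for every m ∈ ℕ. Then for every m ∈ ℕ there exist k_m ∈ ℕ and a tuple ξ_m ∈ Z(m, k_m, m^{-1}) such that |tr_{k_m}(w_j(ξ_m)) − f(w_j)| < m^{-1} for all 1 ≤ j ≤ m; consequently, for every *-monomial w ∈ 𝕎ₙ, tr_{k_m}(w(ξ_m)) → f(w) as m → ∞. -/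

import Mathlib

/-!
Formalization of notions from "The Bootstrap and von Neumann algebras:
The Maximal Intersection Lemma" (K. Jung).

Conventions:
* `MTuple n k` is the space of `n`-tuples of `k × k` complex matrices.
* `ntrace` is the normalized trace `tr_k`.
* `opNorm` is the (ℓ² → ℓ²) operator norm of a matrix.
* A *-monomial in `n` variables is a `Word n`, i.e. a list of pairs
  (index, whether the letter is starred); `evalWord` evaluates it.
-/

open Filter Topology

noncomputable section

/-- `n`-tuples of `k × k` complex matrices, `(M_k(ℂ))ⁿ`. -/
abbrev MTuple (n k : ℕ) := Fin n → Matrix (Fin k) (Fin k) ℂ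

/-- The (Borel) measurable structure on `k × k` complex matrices. -/
instance matMS {k : ℕ} : MeasurableSpace (Matrix (Fin k) (Fin k) ℂ) :=
  (inferInstance : MeasurableSpace (Fin k → Fin k → ℂ))

/-- The normalized trace `tr_k = Tr / k`. -/
def ntrace {k : ℕ} (a : Matrix (Fin k) (Fin k) ℂ) : ℂ := Matrix.trace a / (k : ℂ)

/-- The operator norm of a `k × k` complex matrix acting on ℓ². -/
def opNorm {k : ℕ} (a : Matrix (Fin k) (Fin k) ℂ) : ℝ :=
  ‖Matrix.toEuclideanCLM (𝕜 := ℂ) (n := Fin k) a‖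

/-- A *-monomial in `n` indeterminates: a word in the letters `xᵢ`, `xᵢ*`.
The collection of all of them plays the role of `𝕎ₙ`. -/
abbrev Word (n : ℕ) := List (Fin n × Bool)

/-- Evaluation of a *-monomial on an `n`-tuple in any *-monoid. -/
def evalWord {A : Type*} [Monoid A] [Star A] {n : ℕ} (w : Word n) (x : Fin n → A) : A :=
  (w.map fun p => if p.2 then star (x p.1) else x p.1).prod
/-- A zone on `n` variables (Definition 2.1): a family
`⟨Z(m,k,γ)⟩_{m,k ∈ ℕ, γ > 0}` of Borel sets of matrix tuples, decreasing in `m`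
and `γ`, such that for every *-monomial `w` the quantity `|tr_k(w(ξ))|` is
bounded uniformly over all `m, k, γ` and `ξ ∈ Z(m,k,γ)`. -/
structure Zone (n : ℕ) where
  sets : (m k : ℕ) → ℝ → Set (MTuple n k)
  borel : ∀ m k γ, 0 < γ → MeasurableSet (sets m k γ)
  nested : ∀ m m₁ k γ γ₁, m ≤ m₁ → 0 < γ₁ → γ₁ ≤ γ → sets m₁ k γ₁ ⊆ sets m k γ
  traceBdd : ∀ w : Word n, ∃ C : ℝ, ∀ m k γ, 0 < γ →
      ∀ ξ ∈ sets m k γ, ‖ntrace (evalWord w ξ)‖ ≤ C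

/-- A zone is bounded by `R` if all its members consist of tuples of operator
norm at most `R`. -/
def Zone.BoundedBy {n : ℕ} (Z : Zone n) (R : ℝ) : Prop :=
  ∀ m k γ, 0 < γ → ∀ ξ ∈ Z.sets m k γ, ∀ i, opNorm (ξ i) ≤ R
/-- A scale on `n` variables: Borel measures `μ_{m,k,γ}` on `(M_k(ℂ))ⁿ`, finite
on bounded sets, together with a positive rate sequence `r_k → 0`
(indexed by `k ≥ 1`; `k = 0` is a degenerate placeholder). -/
structure Scale (n : ℕ) where
  meas : (m k : ℕ) → ℝ → MeasureTheory.Measure (MTuple n k)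
  finiteOnBounded : ∀ m k γ, 0 < γ → ∀ R : ℝ, 0 < R →
      meas m k γ {ξ : MTuple n k | ∀ i, opNorm (ξ i) ≤ R} < ⊤
  r : ℕ → ℝ
  r_pos : ∀ k, 1 ≤ k → 0 < r k
  r_lim : Tendsto r atTop (𝓝 (0 : ℝ))

/-- `χ^μ(Z(m,γ)) = limsup_k r_k · log μ_{m,k,γ}(Z(m,k,γ))`, as an extended real.
It is defined for any family of sets of matrix tuples (in particular for the
family of microstate spaces of a tuple of operators, or for a zone). -/
def chiStep {n : ℕ} (μ : Scale n) (F : (m k : ℕ) → ℝ → Set (MTuple n k))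
    (m : ℕ) (γ : ℝ) : EReal :=
  limsup (fun k => (μ.r k : EReal) * ENNReal.log (μ.meas m k γ (F m k γ))) atTop

/-- The free entropy `χ^μ` of a family of sets of matrix tuples relative to the
scale `μ`: `χ^μ(Z) = inf {χ^μ(Z(m,γ)) : m ∈ ℕ, γ > 0}`. -/
def chiE {n : ℕ} (μ : Scale n) (F : (m k : ℕ) → ℝ → Set (MTuple n k)) : EReal :=
  ⨅ (m : ℕ) (_ : 1 ≤ m) (γ : ℝ) (_ : 0 < γ), chiStep μ F m γ
/-- `M_{w,E}(k,γ)`: the set of tuples `ξ` such that `tr_k(w(ξ))` lies in the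
open `γ`-neighborhood of `E ⊆ ℂ`.  `M_{w,λ}` is `Mnb w {λ}`. -/
def Mnb {n : ℕ} (w : Word n) (E : Set ℂ) (k : ℕ) (γ : ℝ) : Set (MTuple n k) :=
  {ξ | ∃ z ∈ E, ‖ntrace (evalWord w ξ) - z‖ < γ}

/-!
Since the constrained zone `Z ∩ ⋂_{j<m} M_{w_j, f(w_j)}` has the same entropy as `Z`, which is
not `-∞`, its slice at `(m, 1/m)` cannot be empty for all large `k`: an empty slice has measure
`0`, and `r_k · log 0 = -∞`. Any `ξ_m` in it has its first `m` moments within `1/m` of `f`, and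
since every word is some `w_j`, each moment converges once `m > j`.
-/

theorem chiE_le_chiStep {n : ℕ} (μ : Scale n) (F : (m k : ℕ) → ℝ → Set (MTuple n k))
    {m : ℕ} (hm : 1 ≤ m) {γ : ℝ} (hγ : 0 < γ) : chiE μ F ≤ chiStep μ F m γ :=
  iInf_le_of_le m <| iInf_le_of_le hm <| iInf_le_of_le γ <| iInf_le _ hγ

theorem chiStep_eq_bot_of_eventually_empty {n : ℕ} (μ : Scale n)
    (F : (m k : ℕ) → ℝ → Set (MTuple n k)) {m : ℕ} {γ : ℝ}
    (hF : ∀ᶠ k in atTop, F m k γ = ∅) : chiStep μ F m γ = ⊥ := by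
  have hterm : ∀ᶠ k in atTop,
      (μ.r k : EReal) * ENNReal.log (μ.meas m k γ (F m k γ)) = ⊥ := by
    filter_upwards [hF, eventually_ge_atTop 1] with k hempty hk
    rw [hempty, MeasureTheory.measure_empty, ENNReal.log_zero]
    exact EReal.mul_bot_of_pos (by exact_mod_cast μ.r_pos k hk)
  rw [chiStep, limsup_congr hterm, limsup_const]

theorem exists_nonempty_of_chiStep_ne_bot {n : ℕ} (μ : Scale n)
    (F : (m k : ℕ) → ℝ → Set (MTuple n k)) {m : ℕ} {γ : ℝ}
    (h : chiStep μ F m γ ≠ ⊥) : ∃ k, 1 ≤ k ∧ (F m k γ).Nonempty := by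
  by_contra! hempty
  exact h <| chiStep_eq_bot_of_eventually_empty μ F <|
    eventually_atTop.2 ⟨1, hempty⟩

theorem mem_iInter_Mnb_singleton {n k : ℕ} (w : ℕ → Word n) (f : Word n → ℂ) (p : ℕ)
    (γ : ℝ) (ξ : MTuple n k) :
    ξ ∈ ⋂ j ∈ Finset.range p, Mnb (w j) {f (w j)} k γ ↔
      ∀ j < p, ‖ntrace (evalWord (w j) ξ) - f (w j)‖ < γ := by
  simp [Mnb]

theorem exists_microstate_near_moments {n : ℕ} (Z : Zone n) (μ : Scale n)
    (w : ℕ → Word n) (f : Word n → ℂ) (hbot : chiE μ Z.sets ≠ ⊥)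
    (hf : ∀ p : ℕ,
      chiE μ (fun m k γ =>
          Z.sets m k γ ∩ ⋂ j ∈ Finset.range p, Mnb (w j) {f (w j)} k γ) =
        chiE μ Z.sets)
    {m : ℕ} (hm : 1 ≤ m) {γ : ℝ} (hγ : 0 < γ) :
    ∃ k, 1 ≤ k ∧ ∃ ξ ∈ Z.sets m k γ,
      ∀ j < m, ‖ntrace (evalWord (w j) ξ) - f (w j)‖ < γ := by
  have hne := ne_bot_of_le_ne_bot (hf m ▸ hbot) (chiE_le_chiStep μ _ hm hγ)
  obtain ⟨k, hk, ξ, hξZ, hξM⟩ := exists_nonempty_of_chiStep_ne_bot μ _ hne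
  exact ⟨k, hk, ξ, hξZ, (mem_iInter_Mnb_singleton w f m γ ξ).1 hξM⟩

theorem tendsto_of_eventually_norm_sub_lt_one_div {E : Type*} [SeminormedAddCommGroup E]
    {u : ℕ → E} {x : E} (h : ∀ᶠ m in atTop, ‖u m - x‖ < 1 / (m : ℝ)) :
    Tendsto u atTop (𝓝 x) :=
  tendsto_iff_norm_sub_tendsto_zero.2 <|
    squeeze_zero' (Eventually.of_forall fun _ => norm_nonneg _)
      (h.mono fun _ => le_of_lt) tendsto_one_div_atTop_nhds_zero_nat

/-- first part of the proof of the Maximal Intersection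
Lemma: if `χ^μ(Z ∩ (∩_{j<m} M_{w_j, f(w_j)})) = χ^μ(Z) > -∞` for every `m`,
then for every `m ≥ 1` there are `k_m ≥ 1` and
`ξ_m ∈ Z(m, k_m, m⁻¹)` whose first `m` constrained *-moments are within `m⁻¹`
of `f`; consequently `tr_{k_m}(w(ξ_m)) → f(w)` for every *-monomial `w`. -/
theorem exists_moment_approximating_microstates {n : ℕ} (Z : Zone n) (μ : Scale n)
    (w : ℕ → Word n) (hw : Function.Bijective w) (f : Word n → ℂ)
    (hbot : chiE μ Z.sets ≠ ⊥)
    (hf : ∀ p : ℕ,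
      chiE μ (fun m k γ =>
          Z.sets m k γ ∩ ⋂ j ∈ Finset.range p, Mnb (w j) {f (w j)} k γ) =
        chiE μ Z.sets) :
    ∃ (K : ℕ → ℕ) (ξ : (m : ℕ) → MTuple n (K m)),
      (∀ m : ℕ, 1 ≤ m →
        1 ≤ K m ∧ ξ m ∈ Z.sets m (K m) (1 / (m : ℝ)) ∧
        ∀ j < m, ‖ntrace (evalWord (w j) (ξ m)) - f (w j)‖ < 1 / (m : ℝ)) ∧
      ∀ v : Word n, Tendsto (fun m => ntrace (evalWord v (ξ m))) atTop (𝓝 (f v)) := by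
  have hmicro : ∀ m, ∃ k, ∃ ξ : MTuple n k, 1 ≤ m →
      1 ≤ k ∧ ξ ∈ Z.sets m k (1 / (m : ℝ)) ∧
        ∀ j < m, ‖ntrace (evalWord (w j) ξ) - f (w j)‖ < 1 / (m : ℝ) := by
    intro m
    by_cases hm : 1 ≤ m
    · obtain ⟨k, hk, ξ, hξZ, hξ⟩ :=
        exists_microstate_near_moments Z μ w f hbot hf hm (γ := 1 / (m : ℝ)) (by positivity)
      exact ⟨k, ξ, fun _ => ⟨hk, hξZ, hξ⟩⟩
    · exact ⟨0, 0, fun h => absurd h hm⟩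
  choose K ξ hξ using hmicro
  refine ⟨K, ξ, hξ, fun v => ?_⟩
  obtain ⟨j, rfl⟩ := hw.surjective v
  refine tendsto_of_eventually_norm_sub_lt_one_div ?_
  filter_upwards [eventually_gt_atTop j] with m hjm
  exact (hξ m (by omega)).2.2 j hjm
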